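/- For any nonzero real number a and any positive integer n, ∑_{k=1}^{n} C(2n,2k) 3^{2k} E_{2n-2k,a} = 2^{2n+1}/a + 4(a-1)/a^2 - ((3a-2)^2/a^3) E_{2n,a}. -/

import Mathlib

open Finset

noncomputable def E (a : ℝ) : ℕ → ℝ
  | 0 => 1
  | n + 1 =>
      -a * ∑ k ∈ (Finset.Icc 1 ((n + 1) / 2)).attach,
        ((n + 1).choose (2 * k.1) : ℝ) * E a (n + 1 - 2 * k.1)
  decreasing_by
    have h := Finset.mem_Icc.mp k.2
    omega

noncomputable def EP (a : ℝ) (n : ℕ) (x : ℝ) : ℝ :=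
  ∑ k ∈ Finset.range (n + 1), (n.choose k : ℝ) * E a k * x ^ (n - k)


/-! Let `F = ∑ Eₙ xⁿ/n!` be the exponential generating function of `E a`. The recurrence says
exactly that `F · (a cosh x + 1 - a) = 1`. Since `cosh 3x = 4 cosh³ x - 3 cosh x`, dividing
`a³ cosh 3x` by `a cosh x + 1 - a` as polynomials in `cosh x` writes `a³ cosh(3x) · F` as a
combination of `cosh 2x`, `cosh x`, `1` and `F`, with remainder coefficient
`(a - 1)(a² - 8a + 4) = a³ - (3a - 2)²`. Comparing the coefficients of `x²ⁿ` gives the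
identity. -/

open PowerSeries
open scoped Nat

lemma sum_range_pow_add_neg_pow_mul {R : Type*} [CommRing R] (c : R) (f : ℕ → R) (m : ℕ) :
    ∑ j ∈ range (m + 1), (c ^ j + (-c) ^ j) * f j =
      2 * ∑ k ∈ range (m / 2 + 1), c ^ (2 * k) * f (2 * k) := by
  induction m with
  | zero => norm_num [two_mul]
  | succ m ih =>
    rw [sum_range_succ, ih]
    rcases Nat.even_or_odd (m + 1) with hev | hodd
    · obtain ⟨r, hr⟩ := hev
      rw [show (m + 1) / 2 = m / 2 + 1 by omega, sum_range_succ _ (m / 2 + 1),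
        show 2 * (m / 2 + 1) = m + 1 by omega, Even.neg_pow ⟨r, hr⟩]
      ring
    · rw [show (m + 1) / 2 = m / 2 by obtain ⟨r, hr⟩ := hodd; omega, hodd.neg_pow]
      ring

section
variable {K : Type*} [Field K]

noncomputable def egf (u : ℕ → K) : K⟦X⟧ := mk fun n => u n / n !

@[simp] lemma coeff_egf (u : ℕ → K) (n : ℕ) : coeff n (egf u) = u n / n ! := coeff_mk _ _

variable [CharZero K]

lemma egf_mul (u v : ℕ → K) :
    egf u * egf v = egf fun n => ∑ j ∈ range (n + 1), (n.choose j : K) * u j * v (n - j) := by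
  ext n
  rw [coeff_mul, Nat.sum_antidiagonal_eq_sum_range_succ_mk, coeff_egf, sum_div]
  refine sum_congr rfl fun j hj => ?_
  rw [coeff_egf, coeff_egf, Nat.cast_choose K (Nat.lt_succ_iff.mp (mem_range.mp hj))]
  have : (n ! : K) ≠ 0 := Nat.cast_ne_zero.mpr n.factorial_ne_zero
  field_simp

noncomputable def twoCosh (c : K) : K⟦X⟧ := rescale c (exp K) + rescale (-c) (exp K)

lemma twoCosh_eq_egf (c : K) : twoCosh c = egf fun n => c ^ n + (-c) ^ n := by
  ext n
  simp only [twoCosh, map_add, coeff_rescale, coeff_exp, one_div, map_inv₀, map_natCast,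
    coeff_egf]
  ring

lemma twoCosh_zero : twoCosh (0 : K) = 2 := by
  rw [twoCosh, neg_zero, rescale_zero, RingHom.comp_apply, constantCoeff_exp, map_one,
    one_add_one_eq_two]

lemma twoCosh_mul_twoCosh (c d : K) :
    twoCosh c * twoCosh d = twoCosh (c + d) + twoCosh (c - d) := by
  simp only [twoCosh, add_mul, mul_add, exp_mul_exp_eq_exp_add]
  rw [show c + -d = c - d by ring, show -c + d = -(c - d) by ring, show -c + -d = -(c + d) by ring]
  abel

lemma twoCosh_mul_egf (c : K) (u : ℕ → K) :
    twoCosh c * egf u = egf fun m =>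
      2 * ∑ k ∈ range (m / 2 + 1), (m.choose (2 * k) : K) * c ^ (2 * k) * u (m - 2 * k) := by
  rw [twoCosh_eq_egf, egf_mul]
  congr 1; funext m
  calc _ = ∑ j ∈ range (m + 1), (c ^ j + (-c) ^ j) * ((m.choose j : K) * u (m - j)) :=
        sum_congr rfl fun j _ => by ring
    _ = _ := by
        rw [sum_range_pow_add_neg_pow_mul]
        exact congrArg _ (sum_congr rfl fun k _ => by ring)
end

section
variable (a : ℝ)

lemma E_zero : E a 0 = 1 := by rw [E]

lemma E_succ (m : ℕ) :
    E a (m + 1) =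
      -a * ∑ k ∈ Icc 1 ((m + 1) / 2), ((m + 1).choose (2 * k) : ℝ) * E a (m + 1 - 2 * k) := by
  rw [E, sum_attach (Icc 1 ((m + 1) / 2))
    fun k => ((m + 1).choose (2 * k) : ℝ) * E a (m + 1 - 2 * k)]

lemma mul_sum_choose_even_mul_E (m : ℕ) :
    a * ∑ k ∈ range (m / 2 + 1), (m.choose (2 * k) : ℝ) * E a (m - 2 * k) =
      (a - 1) * E a m + if m = 0 then 1 else 0 := by
  cases m with
  | zero => simp [E_zero]
  | succ m =>
    rw [sum_range_eq_add_Ico _ (by omega), Ico_add_one_right_eq_Icc, if_neg m.succ_ne_zero,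
      Nat.choose_zero_right, Nat.mul_zero, Nat.sub_zero, E_succ a m]
    ring

lemma twoCosh_one_mul_egf_E :
    (C a * twoCosh 1 + C (2 - 2 * a)) * egf (E a) = 2 := by
  rw [add_mul, mul_assoc, twoCosh_mul_egf, ← map_ofNat C 2]
  ext m
  simp only [map_add, coeff_C_mul, coeff_egf, coeff_C, one_pow, mul_one]
  have hm : (m ! : ℝ) ≠ 0 := by positivity
  have h := mul_sum_choose_even_mul_E a m
  split_ifs at h ⊢ with hm0
  · subst hm0
    rw [Nat.factorial_zero, Nat.cast_one, div_one, div_one]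
    linear_combination 2 * h
  · field_simp
    linear_combination 2 * h

lemma C_pow_three_mul_twoCosh_three_mul_egf_E :
    C (a ^ 3) * (twoCosh 3 * egf (E a)) =
      C (2 * a ^ 2) * twoCosh 2 + C (4 * a ^ 2 - 4 * a) * twoCosh 1 +
        C (6 * a ^ 2 - 16 * a + 8) + C (2 * a ^ 3 - 18 * a ^ 2 + 24 * a - 8) * egf (E a) := by
  have h21 : twoCosh (2 : ℝ) * twoCosh 1 = twoCosh 3 + twoCosh 1 := by
    rw [twoCosh_mul_twoCosh]; norm_num
  have h11 : twoCosh (1 : ℝ) * twoCosh 1 = twoCosh 2 + 2 := by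
    rw [twoCosh_mul_twoCosh]; norm_num [twoCosh_zero]
  have hE := twoCosh_one_mul_egf_E a
  simp only [map_pow, map_mul, map_sub, map_add, map_ofNat] at hE ⊢
  linear_combination
    -C a ^ 3 * egf (E a) * h21 - (2 * C a ^ 3 - 2 * C a ^ 2) * egf (E a) * h11 +
      (C a ^ 2 * twoCosh 2 + (2 * C a ^ 2 - 2 * C a) * twoCosh 1 + (3 * C a ^ 2 - 8 * C a + 4)) * hE

lemma pow_three_mul_sum_choose_even_mul_three_pow_mul_E {m : ℕ} (hm : m ≠ 0) :
    a ^ 3 * ∑ k ∈ range (m / 2 + 1), (m.choose (2 * k) : ℝ) * 3 ^ (2 * k) * E a (m - 2 * k) =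
      a ^ 2 * (2 ^ m + (-2) ^ m) + (2 * a ^ 2 - 2 * a) * (1 + (-1) ^ m) +
        (a ^ 3 - 9 * a ^ 2 + 12 * a - 4) * E a m := by
  have h := congrArg (coeff m) (C_pow_three_mul_twoCosh_three_mul_egf_E a)
  rw [twoCosh_mul_egf] at h
  simp only [map_add, coeff_C_mul, coeff_C, coeff_egf, twoCosh_eq_egf, if_neg hm] at h
  have : (m ! : ℝ) ≠ 0 := by positivity
  field_simp at h
  linear_combination h / 2
end

theorem stmt9 (a : ℝ) (ha : a ≠ 0) (n : ℕ) (hn : 1 ≤ n) :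
    ∑ k ∈ Finset.Icc 1 n, ((2 * n).choose (2 * k) : ℝ) * 3 ^ (2 * k) * E a (2 * n - 2 * k) =
      2 ^ (2 * n + 1) / a + 4 * (a - 1) / a ^ 2 - (3 * a - 2) ^ 2 / a ^ 3 * E a (2 * n) := by
  have h := pow_three_mul_sum_choose_even_mul_three_pow_mul_E a (m := 2 * n) (by omega)
  rw [Nat.mul_div_cancel_left n two_pos, sum_range_eq_add_Ico _ (by omega),
    Ico_add_one_right_eq_Icc, Even.neg_pow (even_two_mul n), Even.neg_one_pow (even_two_mul n)] at h
  simp only [Nat.choose_zero_right, Nat.mul_zero, pow_zero, Nat.sub_zero, Nat.cast_one,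
    one_mul] at h
  field_simp
  linear_combination h
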